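/- Let k ≥ 3 and n = 2k−1. For every integer s ≥ 1, α_{2k−1, s(2k−3)} = s(2k−1); that is, the least total degree of a monomial belonging to I_{B_{2k−1}}^{(s(2k−3))} equals s(2k−1). -/

import Mathlib

open MvPolynomial
open Fin.NatCast

/-- The subtree (arc) of `n-2` consecutive cycle vertices of the `n`-cycle `Q_n`
(on vertices `1,…,n` inside `Fin (n+2)`), starting at vertex `i+1`, for `i = 0,…,n-1`.
The family `arcT n i`, `i < n`, is exactly the family `𝒯` of subtrees of `Q_n`
with `n-2` vertices. -/
def arcT (n i : ℕ) : Finset (Fin (n + 2)) :=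
  (Finset.range (n - 2)).image fun t => (((i + t) % n + 1 : ℕ) : Fin (n + 2))

/-- The monomial prime ideal `⟨x_v⟩ + ⟨x_j : j ∈ S⟩`. -/
noncomputable def apexIdeal (K : Type*) [Field K] (n : ℕ) (v : Fin (n + 2))
    (S : Finset (Fin (n + 2))) : Ideal (MvPolynomial (Fin (n + 2)) K) :=
  Ideal.span (insert (X v) (X '' (S : Set (Fin (n+2))) : Set (MvPolynomial (Fin (n + 2)) K)))

/-- The `m`-th symbolic power `I_{B_n}^{(m)} = ⋂_{S ∈ 𝒯} (I_{[0,S]}^m ∩ I_{[n+1,S]}^m)`. -/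
noncomputable def symbPow (K : Type*) [Field K] (n m : ℕ) : Ideal (MvPolynomial (Fin (n + 2)) K) :=
  ⨅ i ∈ Finset.range n,
    apexIdeal K n 0 (arcT n i) ^ m ⊓ apexIdeal K n ((n + 1 : ℕ) : Fin (n + 2)) (arcT n i) ^ m

/-- The monomial `x_0^{a_0} x_1^{a_1} ⋯ x_{n+1}^{a_{n+1}}`. -/
noncomputable def monom (K : Type*) [Field K] (n : ℕ) (a : Fin (n + 2) → ℕ) :
    MvPolynomial (Fin (n + 2)) K :=
  ∏ i, X i ^ a i

/-- `α_{n,m}`: the least total degree of a monomial lying in `I_{B_n}^{(m)}`. -/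
noncomputable def alphaSymb (K : Type*) [Field K] (n m : ℕ) : ℕ :=
  sInf {d | ∃ a : Fin (n + 2) → ℕ, (∑ i, a i) = d ∧ monom K n a ∈ symbPow K n m}

/-- The Stanley–Reisner ideal `I_{B_n}` of the bipyramid `B_n`, presented by its
quadratic generators: `x_0 x_{n+1}` together with `x_i x_j` for non-adjacent
vertices `i, j` of the cycle `Q_n`. -/
noncomputable def bipyrIdeal (K : Type*) [Field K] (n : ℕ) : Ideal (MvPolynomial (Fin (n + 2)) K) :=
  Ideal.span ({X (0 : Fin (n + 2)) * X ((n + 1 : ℕ) : Fin (n + 2))} ∪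
    {p | ∃ i j : ℕ, 1 ≤ i ∧ i ≤ n ∧ 1 ≤ j ∧ j ≤ n ∧ i ≠ j ∧
      j ≠ i % n + 1 ∧ i ≠ j % n + 1 ∧
      p = X ((i : ℕ) : Fin (n + 2)) * X ((j : ℕ) : Fin (n + 2))})

/-!
For `n ≥ 4` and `m = s (n - 2)`, the exponents of a monomial in `I_{B_n}^{(m)}` give every
apex-plus-arc set weight at least `m`. Each cycle vertex lies in exactly `n - 2` of the `n` arcs,
so summing over the arcs gives `n m ≤ n bᵢ + (n - 2) A`, where `A` is the weight of the cycle and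
`b₀, b₁` are the apex exponents. Adding the two inequalities and using `n ≤ 2 (n - 2)` yields
`s n ≤ b₀ + b₁ + A`, and the monomial `(x_1 ⋯ x_n)^s` attains this bound.
-/

open Finset

theorem prod_X_pow_mem_span_X_pow_iff {σ R : Type*} [Fintype σ] [CommSemiring R] [Nontrivial R]
    (T : Finset σ) (a : σ → ℕ) (m : ℕ) :
    ∏ i, (X i : MvPolynomial σ R) ^ a i ∈ Ideal.span (X '' (T : Set σ)) ^ m ↔
      m ≤ ∑ j ∈ T, a j := by
  classical
  constructor
  · intro h
    -- specialising the variables of `T` to `X` and the others to `1` reduces membership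
    -- to divisibility by `X ^ m` in `R[X]`
    let φ : MvPolynomial σ R →ₐ[R] Polynomial R :=
      aeval fun j => if j ∈ T then Polynomial.X else 1
    have hφ : Ideal.map φ (Ideal.span (X '' (T : Set σ))) ≤ Ideal.span {Polynomial.X} := by
      rw [Ideal.map_span, Ideal.span_le]
      rintro _ ⟨_, ⟨j, hj, rfl⟩, rfl⟩
      simp [φ, Finset.mem_coe.1 hj]
    have hmem := Ideal.pow_right_mono hφ m
      (Ideal.map_pow (φ : MvPolynomial σ R →+* Polynomial R) _ m ▸ Ideal.mem_map_of_mem φ h)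
    have himage : φ (∏ i, X i ^ a i) = Polynomial.X ^ ∑ j ∈ T, a j := by
      simp [φ, map_prod, ite_pow, Finset.prod_ite_mem, Finset.prod_pow_eq_pow_sum]
    rw [himage, Ideal.span_singleton_pow, Ideal.mem_span_singleton,
      Polynomial.X_pow_dvd_iff] at hmem
    by_contra hlt
    simpa using hmem _ (not_le.1 hlt)
  · intro h
    rw [← Finset.prod_mul_prod_compl T]
    refine Ideal.mul_mem_right _ _ (Ideal.pow_le_pow_right h ?_)
    rw [← Finset.prod_pow_eq_pow_sum]
    exact Ideal.prod_mem_prod fun j hj =>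
      Ideal.pow_mem_pow (Ideal.subset_span (Set.mem_image_of_mem X (Finset.mem_coe.2 hj))) _

theorem sum_range_add_mod {M : Type*} [AddCommMonoid M] (g : ℕ → M) (n t : ℕ) :
    ∑ i ∈ range n, g ((i + t) % n) = ∑ i ∈ range n, g i := by
  cases n with
  | zero => simp
  | succ n =>
    simp only [← Fin.sum_univ_eq_sum_range]
    refine Fintype.sum_equiv (Equiv.addRight (t : Fin (n + 1))) _ _ fun i => ?_
    simp [Fin.val_add]

theorem sum_univ_fin_add_two {M : Type*} [AddCommMonoid M] (n : ℕ) (a : Fin (n + 2) → M) :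
    ∑ j, a j =
      a 0 + a ((n + 1 : ℕ) : Fin (n + 2)) + ∑ r ∈ range n, a ((r + 1 : ℕ) : Fin (n + 2)) := by
  calc ∑ j, a j = ∑ i ∈ range (n + 2), a (i : Fin (n + 2)) := by
        simp only [← Fin.sum_univ_eq_sum_range, Fin.cast_val_eq_self]
    _ = _ := by
        rw [sum_range_succ, sum_range_succ', Nat.cast_zero]
        abel

theorem sum_arcT {M : Type*} [AddCommMonoid M] (n i : ℕ) (f : Fin (n + 2) → M) :
    ∑ j ∈ arcT n i, f j = ∑ t ∈ range (n - 2), f ((i + t) % n + 1 : ℕ) := by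
  rw [arcT, sum_image]
  intro x hx y hy hxy
  simp only [coe_range, Set.mem_Iio] at hx hy
  simp only at hxy
  have hval := congrArg Fin.val hxy
  have hx' : (i + x) % n + 1 < n + 2 := by have := Nat.mod_lt (i + x) (by omega : 0 < n); omega
  have hy' : (i + y) % n + 1 < n + 2 := by have := Nat.mod_lt (i + y) (by omega : 0 < n); omega
  rw [Fin.val_cast_of_lt hx', Fin.val_cast_of_lt hy'] at hval
  exact Nat.ModEq.eq_of_lt_of_lt (Nat.ModEq.add_left_cancel' i (Nat.succ_injective hval))
    (by omega) (by omega)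

theorem sum_sum_arcT {M : Type*} [AddCommMonoid M] (n : ℕ) (f : Fin (n + 2) → M) :
    ∑ i ∈ range n, ∑ j ∈ arcT n i, f j = (n - 2) • ∑ r ∈ range n, f (r + 1 : ℕ) := by
  simp only [sum_arcT]
  rw [sum_comm]
  simp only [sum_range_add_mod (fun r => f (r + 1 : ℕ)), sum_const, card_range]

theorem val_mem_Icc_of_mem_arcT {n i : ℕ} {j : Fin (n + 2)} (hj : j ∈ arcT n i) :
    1 ≤ j.val ∧ j.val ≤ n := by
  obtain ⟨t, ht, rfl⟩ := mem_image.1 hj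
  have := Nat.mod_lt (i + t) (by simp at ht; omega : 0 < n)
  rw [Fin.val_cast_of_lt (by omega)]
  omega

theorem zero_notMem_arcT (n i : ℕ) : (0 : Fin (n + 2)) ∉ arcT n i := fun h => by
  simpa using val_mem_Icc_of_mem_arcT h

theorem last_notMem_arcT (n i : ℕ) : ((n + 1 : ℕ) : Fin (n + 2)) ∉ arcT n i := fun h => by
  have := val_mem_Icc_of_mem_arcT h
  rw [Fin.val_cast_of_lt (by omega)] at this
  omega

theorem apexIdeal_eq_span (K : Type*) [Field K] (n : ℕ) (v : Fin (n + 2))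
    (S : Finset (Fin (n + 2))) :
    apexIdeal K n v S = Ideal.span (X '' ((insert v S : Finset _) : Set (Fin (n + 2)))) := by
  rw [apexIdeal, coe_insert, Set.image_insert_eq]

theorem monom_mem_apexIdeal_pow_iff (K : Type*) [Field K] {n : ℕ} {v : Fin (n + 2)}
    {S : Finset (Fin (n + 2))} (hv : v ∉ S) (m : ℕ) (a : Fin (n + 2) → ℕ) :
    monom K n a ∈ apexIdeal K n v S ^ m ↔ m ≤ a v + ∑ j ∈ S, a j := by
  rw [apexIdeal_eq_span, monom, prod_X_pow_mem_span_X_pow_iff, sum_insert hv]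

theorem monom_mem_symbPow_iff (K : Type*) [Field K] (n m : ℕ) (a : Fin (n + 2) → ℕ) :
    monom K n a ∈ symbPow K n m ↔ ∀ i ∈ range n,
      m ≤ a 0 + ∑ j ∈ arcT n i, a j ∧
        m ≤ a ((n + 1 : ℕ) : Fin (n + 2)) + ∑ j ∈ arcT n i, a j := by
  simp only [symbPow, Submodule.mem_iInf, Submodule.mem_inf,
    monom_mem_apexIdeal_pow_iff K (zero_notMem_arcT n _),
    monom_mem_apexIdeal_pow_iff K (last_notMem_arcT n _)]

theorem mul_le_of_forall_le_add_sum_arcT {n m b : ℕ} {a : Fin (n + 2) → ℕ}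
    (h : ∀ i ∈ range n, m ≤ b + ∑ j ∈ arcT n i, a j) :
    n * m ≤ n * b + (n - 2) * ∑ r ∈ range n, a (r + 1 : ℕ) := by
  simpa [sum_add_distrib, sum_sum_arcT] using sum_le_sum h

theorem mul_le_sum_of_monom_mem_symbPow (K : Type*) [Field K] {n : ℕ} (hn : 4 ≤ n) (s : ℕ)
    {a : Fin (n + 2) → ℕ} (h : monom K n a ∈ symbPow K n (s * (n - 2))) :
    s * n ≤ ∑ j, a j := by
  rw [monom_mem_symbPow_iff] at h
  have h₀ := mul_le_of_forall_le_add_sum_arcT fun i hi => (h i hi).1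
  have h₁ := mul_le_of_forall_le_add_sum_arcT fun i hi => (h i hi).2
  rw [sum_univ_fin_add_two]
  obtain ⟨p, rfl⟩ : ∃ p, n = p + 2 := ⟨n - 2, by omega⟩
  simp only [Nat.add_sub_cancel] at h₀ h₁
  nlinarith

def cycleExponent (n s : ℕ) (j : Fin (n + 2)) : ℕ := if 1 ≤ j.val ∧ j.val ≤ n then s else 0

theorem cycleExponent_natCast {n : ℕ} (s : ℕ) {r : ℕ} (h₁ : 1 ≤ r) (h₂ : r ≤ n) :
    cycleExponent n s (r : Fin (n + 2)) = s := by
  rw [cycleExponent, Fin.val_cast_of_lt (by omega), if_pos ⟨h₁, h₂⟩]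

theorem cycleExponent_zero (n s : ℕ) : cycleExponent n s 0 = 0 := by
  simp [cycleExponent]

theorem cycleExponent_last (n s : ℕ) : cycleExponent n s ((n + 1 : ℕ) : Fin (n + 2)) = 0 := by
  rw [cycleExponent, Fin.val_cast_of_lt (by omega), if_neg (by omega)]

theorem sum_cycleExponent (n s : ℕ) : ∑ j, cycleExponent n s j = s * n := by
  rw [sum_univ_fin_add_two, cycleExponent_zero, cycleExponent_last,
    sum_congr rfl fun r hr => cycleExponent_natCast s (by omega) (by simp at hr; omega)]
  simp [mul_comm]

theorem monom_cycleExponent_mem_symbPow (K : Type*) [Field K] (n s : ℕ) :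
    monom K n (cycleExponent n s) ∈ symbPow K n (s * (n - 2)) := by
  have harc (i : ℕ) : ∑ j ∈ arcT n i, cycleExponent n s j = s * (n - 2) := by
    rw [sum_arcT, sum_congr rfl fun t ht => cycleExponent_natCast s (by omega)
      (by have := Nat.mod_lt (i + t) (by simp at ht; omega : 0 < n); omega)]
    simp [mul_comm]
  simp [monom_mem_symbPow_iff, harc, cycleExponent_zero]

theorem alphaSymb_mul_sub_two (K : Type*) [Field K] {n : ℕ} (hn : 4 ≤ n) (s : ℕ) :
    alphaSymb K n (s * (n - 2)) = s * n := by
  have hwit : s * n ∈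
      {d | ∃ a : Fin (n + 2) → ℕ, ∑ i, a i = d ∧ monom K n a ∈ symbPow K n (s * (n - 2))} :=
    ⟨_, sum_cycleExponent n s, monom_cycleExponent_mem_symbPow K n s⟩
  refine le_antisymm (Nat.sInf_le hwit) (le_csInf ⟨_, hwit⟩ ?_)
  rintro d ⟨a, rfl, ha⟩
  exact mul_le_sum_of_monom_mem_symbPow K hn s ha

theorem alpha_odd_case_general (K : Type*) [Field K] (k s : ℕ) (hk : 3 ≤ k) :
    alphaSymb K (2 * k - 1) (s * (2 * k - 3)) = s * (2 * k - 1) := by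
  rw [show 2 * k - 3 = 2 * k - 1 - 2 by omega]
  exact alphaSymb_mul_sub_two K (by omega) s

/-- For `k ≥ 3`, `n = 2k - 1` and every `s ≥ 1`:
`α_{2k-1, s(2k-3)} = s(2k-1)`. -/
theorem alpha_odd_case (K : Type*) [Field K] (k s : ℕ) (hk : 3 ≤ k) (hs : 1 ≤ s) :
    alphaSymb K (2 * k - 1) (s * (2 * k - 3)) = s * (2 * k - 1) :=
  alpha_odd_case_general K k s hk
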